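/- arXiv:2401.17240 — 5 statements merged into one kernel-verified Lean document; each statement's English description precedes it below -/
import Mathlib

section
/- Let (𝔓, 𝔑) be a complementary pair of subcategories of a triangulated category 𝔗, with associated exact triangles P_A → A → N_A → ΣP_A for each object A. Then the assignment A ↦ P_A extends uniquely (up to unique natural isomorphism) to a functor L: 𝔗 → 𝔗 together with a natural transformation μ: L ⇒ id, and any triangulated functor Φ: 𝔗 → 𝔗' vanishing on 𝔑 factors up to natural isomorphism through L. -/
/-!
STATEMENT 2: For a complementary pair (𝔓, 𝔑) of a triangulated category 𝔗 with exact triangles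
P_A → A → N_A → ΣP_A, the assignment A ↦ P_A extends (uniquely up to unique natural isomorphism)
to a functor L : 𝔗 → 𝔗 with a natural transformation μ : L ⇒ id, and any triangulated functor
Φ : 𝔗 → 𝔗' vanishing on 𝔑 factors up to natural isomorphism through L (i.e. Φ(μ_A) is
invertible for every A).
-/

open CategoryTheory Limits Pretriangulated

universe v u

/-- A thick full triangulated subcategory encoded as a predicate on objects. -/
structure ThickTriangulatedSub (C : Type u) [Category.{v} C] [Preadditive C] [HasZeroObject C]
    [HasShift C ℤ] [∀ n : ℤ, (shiftFunctor C n).Additive] [Pretriangulated C] where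
  P : C → Prop
  zero : ∀ X : C, IsZero X → P X
  shift : ∀ (X : C) (n : ℤ), P X → P (X⟦n⟧)
  ext : ∀ T : Triangle C, T ∈ (distTriang C) → P T.obj₁ → P T.obj₃ → P T.obj₂
  thick : ∀ (X Y : C) (i : X ⟶ Y) (r : Y ⟶ X), i ≫ r = 𝟙 X → P Y → P X

variable {C : Type u} [Category.{v} C] [Preadditive C] [HasZeroObject C] [HasShift C ℤ]
  [∀ n : ℤ, (shiftFunctor C n).Additive] [Pretriangulated C]

/-- A pair (𝔓, 𝔑) of thick full triangulated subcategories is complementary. -/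
def IsComplementaryPair (P N : ThickTriangulatedSub C) : Prop :=
  (∀ (X Y : C), P.P X → N.P Y → ∀ f : X ⟶ Y, f = 0) ∧
  (∀ A : C, ∃ (X Y : C) (f : X ⟶ A) (g : A ⟶ Y) (h : Y ⟶ X⟦(1 : ℤ)⟧),
    P.P X ∧ N.P Y ∧ Triangle.mk f g h ∈ (distTriang C))

/-- The property that a functor `L` with a natural transformation `μ : L ⟶ 𝟭` realizes the
assignment `A ↦ P_A` of a complementary pair: every `L.obj A` lies in `𝔓` and `μ.app A` embeds
in an exact triangle `L A → A → N → Σ(L A)` with third term in `𝔑`. -/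
def IsLocalisationData (𝔓 𝔑 : ThickTriangulatedSub C) (L : C ⥤ C) (μ : L ⟶ 𝟭 C) : Prop :=
  (∀ A : C, 𝔓.P (L.obj A)) ∧
  (∀ A : C, ∃ (Y : C) (g : A ⟶ Y) (w : Y ⟶ (L.obj A)⟦(1 : ℤ)⟧),
    𝔑.P Y ∧ Triangle.mk (μ.app A) g w ∈ (distTriang C))

theorem localisation_functor_exists_unique_and_factors
    (𝔓 𝔑 : ThickTriangulatedSub C) (hc : IsComplementaryPair 𝔓 𝔑) :
    ∃ (L : C ⥤ C) (μ : L ⟶ 𝟭 C),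
      IsLocalisationData 𝔓 𝔑 L μ ∧
      -- uniqueness up to a unique natural isomorphism
      (∀ (L' : C ⥤ C) (μ' : L' ⟶ 𝟭 C), IsLocalisationData 𝔓 𝔑 L' μ' →
        ∃! e : L ≅ L', e.hom ≫ μ' = μ) ∧
      -- any triangulated functor vanishing on 𝔑 factors through L up to natural isomorphism:
      -- Φ(μ_A) is invertible for every A, i.e. Φμ : L ⋙ Φ ≅ Φ.
      (∀ {D : Type u} [Category.{v} D] [Preadditive D] [HasZeroObject D] [HasShift D ℤ]
          [∀ n : ℤ, (shiftFunctor D n).Additive] [Pretriangulated D]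
          (Φ : C ⥤ D) [Φ.CommShift ℤ] [Φ.IsTriangulated],
          (∀ A : C, 𝔑.P A → IsZero (Φ.obj A)) → ∀ A : C, IsIso (Φ.map (μ.app A))) := by
  classical
  obtain ⟨hzero, hexist⟩ := hc
  choose X Y f g w hP hN hT using hexist
  -- the key lifting lemma
  have key : ∀ (Q P' B N' : C) (m : P' ⟶ B) (g' : B ⟶ N') (w' : N' ⟶ P'⟦(1:ℤ)⟧),
      𝔑.P N' → (Triangle.mk m g' w' ∈ distTriang C) → 𝔓.P Q →
      ∀ u : Q ⟶ B, ∃! l : Q ⟶ P', l ≫ m = u := by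
    intro Q P' B N' m g' w' hN' hdt hQ u
    obtain ⟨l₀, hl₀⟩ := Triangle.coyoneda_exact₂ _ hdt u (hzero _ _ hQ hN' _)
    have hl : u = (l₀ : Q ⟶ P') ≫ m := hl₀
    set l : Q ⟶ P' := l₀
    refine ⟨l, hl.symm, ?_⟩
    intro l' hl'
    have hd : (l' - l) ≫ m = 0 := by rw [Preadditive.sub_comp, hl']; exact sub_eq_zero.mpr hl
    obtain ⟨e, he⟩ := Triangle.coyoneda_exact₂ _ (inv_rot_of_distTriang _ hdt) (l' - l) hd
    have he0 : e = 0 := hzero _ _ hQ (𝔑.shift _ (-1) hN') e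
    rw [he0, zero_comp] at he
    rw [← sub_eq_zero]
    exact he
  -- lifts against the chosen triangles
  have key' : ∀ (Q B : C), 𝔓.P Q → ∀ u : Q ⟶ B, ∃! l : Q ⟶ X B, l ≫ f B = u :=
    fun Q B hQ u => key Q (X B) B (Y B) (f B) (g B) (w B) (hN B) (hT B) hQ u
  choose lift hlift₀ huniq₀ using fun (Q B : C) (hQ : 𝔓.P Q) (u : Q ⟶ B) => key' Q B hQ u
  have hlift : ∀ (Q B : C) (hQ : 𝔓.P Q) (u : Q ⟶ B), lift Q B hQ u ≫ f B = u := hlift₀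
  have huniq : ∀ (Q B : C) (hQ : 𝔓.P Q) (u : Q ⟶ B) (y : Q ⟶ X B),
      y ≫ f B = u → y = lift Q B hQ u := huniq₀
  -- the functor L
  let L : C ⥤ C :=
    { obj := X
      map := fun {A B} u => lift (X A) B (hP A) (f A ≫ u)
      map_id := fun A => (huniq₀ (X A) A (hP A) (f A ≫ 𝟙 A) (𝟙 (X A)) (by simp)).symm
      map_comp := fun {A B D} u v =>
        (huniq₀ (X A) D (hP A) (f A ≫ (u ≫ v))
          (lift (X A) B (hP A) (f A ≫ u) ≫ lift (X B) D (hP B) (f B ≫ v)) (by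
            show _ ≫ f D = _
            rw [Category.assoc, hlift, ← Category.assoc, hlift, Category.assoc])).symm }
  let μ : L ⟶ 𝟭 C :=
    { app := f
      naturality := fun A B u => hlift (X A) B (hP A) (f A ≫ u) }
  have hdata : IsLocalisationData 𝔓 𝔑 L μ :=
    ⟨hP, fun A => ⟨Y A, g A, w A, hN A, hT A⟩⟩
  refine ⟨L, μ, hdata, ?_, ?_⟩
  · -- uniqueness up to unique natural isomorphism
    intro L' μ' hd'
    obtain ⟨hP', hN'⟩ := hd'
    choose Y' g' w' hNY' hT' using hN'
    -- components of the iso and its inverse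
    have keyF : ∀ (Q A : C), 𝔓.P Q → ∀ u : Q ⟶ A, ∃! l : Q ⟶ L'.obj A, l ≫ μ'.app A = u :=
      fun Q A hQ u => key Q (L'.obj A) A (Y' A) (μ'.app A) (g' A) (w' A) (hNY' A) (hT' A) hQ u
    choose lift' hlift₁ huniq₁ using fun (Q A : C) (hQ : 𝔓.P Q) (u : Q ⟶ A) => keyF Q A hQ u
    have hlift' : ∀ (Q A : C) (hQ : 𝔓.P Q) (u : Q ⟶ A), lift' Q A hQ u ≫ μ'.app A = u := hlift₁
    have huniq' : ∀ (Q A : C) (hQ : 𝔓.P Q) (u : Q ⟶ A) (y : Q ⟶ L'.obj A),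
        y ≫ μ'.app A = u → y = lift' Q A hQ u := huniq₁
    have hcompfwd : ∀ A : C, lift' (X A) A (hP A) (f A) ≫ lift (L'.obj A) A (hP' A) (μ'.app A)
        = 𝟙 (X A) := by
      intro A
      have h1 : (lift' (X A) A (hP A) (f A) ≫ lift (L'.obj A) A (hP' A) (μ'.app A)) ≫ f A
          = f A := by rw [Category.assoc, hlift, hlift']
      have h2 := huniq (X A) A (hP A) (f A) _ h1
      have h3 := huniq (X A) A (hP A) (f A) (𝟙 (X A)) (by simp)
      rw [h2, ← h3]
    have hcompbwd : ∀ A : C, lift (L'.obj A) A (hP' A) (μ'.app A) ≫ lift' (X A) A (hP A) (f A)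
        = 𝟙 (L'.obj A) := by
      intro A
      have h1 : (lift (L'.obj A) A (hP' A) (μ'.app A) ≫ lift' (X A) A (hP A) (f A)) ≫ μ'.app A
          = μ'.app A := by rw [Category.assoc, hlift']; exact hlift _ _ _ _
      have h2 := huniq' (L'.obj A) A (hP' A) (μ'.app A) _ h1
      have h3 := huniq' (L'.obj A) A (hP' A) (μ'.app A) (𝟙 (L'.obj A)) (by simp)
      rw [h2, ← h3]
    have hnat : ∀ {A B : C} (u : A ⟶ B),
        L.map u ≫ lift' (X B) B (hP B) (f B) = lift' (X A) A (hP A) (f A) ≫ L'.map u := by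
      intro A B u
      have e1 : (L.map u ≫ lift' (X B) B (hP B) (f B)) ≫ μ'.app B = f A ≫ u := by
        rw [Category.assoc, hlift']
        exact hlift (X A) B (hP A) (f A ≫ u)
      have e2 : (lift' (X A) A (hP A) (f A) ≫ L'.map u) ≫ μ'.app B = f A ≫ u := by
        rw [Category.assoc, μ'.naturality, ← Category.assoc, hlift']
        rfl
      rw [huniq' (X A) B (hP A) (f A ≫ u) _ e1, huniq' (X A) B (hP A) (f A ≫ u) _ e2]
    refine ⟨NatIso.ofComponents
      (fun A => ⟨lift' (X A) A (hP A) (f A), lift (L'.obj A) A (hP' A) (μ'.app A),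
        hcompfwd A, hcompbwd A⟩)
      (fun {A B} u => hnat u), ?_, ?_⟩
    · ext A
      exact hlift' (X A) A (hP A) (f A)
    · intro e he
      ext A
      have hcomp : e.hom.app A ≫ μ'.app A = f A := by
        have := congrArg (fun t => NatTrans.app t A) he
        simpa using this
      exact (huniq' (X A) A (hP A) (f A) _ hcomp).trans rfl
  · -- factorisation of triangulated functors killing 𝔑
    intro D _ _ _ _ _ _ Φ _ _ hΦ A
    have hdist := Φ.map_distinguished _ (hT A)
    have hz3 : IsZero ((Φ.mapTriangle.obj (Triangle.mk (f A) (g A) (w A))).obj₃) := hΦ _ (hN A)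
    have := (Triangle.isZero₃_iff_isIso₁ _ hdist).1 hz3
    exact this
end

section
/- Let 𝔗 and 𝔗' be triangulated categories with countable direct sums and let F: 𝔗 → 𝔗' be a triangulated functor with a left adjoint E: 𝔗' → 𝔗, both compatible with countable direct sums. Set 𝔍 = ker F (the morphisms killed by F). Then 𝔍 has enough projectives, and the 𝔍-projective objects of 𝔗 are precisely the direct summands of objects of the form E(A) for A ∈ 𝔗'. -/
/-!
STATEMENT 5: Let F : 𝔗 → 𝔗' be a triangulated functor between triangulated categories with
countable direct sums, with a left adjoint E, both compatible with countable direct sums, and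
let 𝔍 = ker F. Then 𝔍 has enough projectives, and the 𝔍-projective objects are exactly the
direct summands of the objects E(A), A ∈ 𝔗'.
-/

open CategoryTheory Limits Pretriangulated

universe v u u'

section

variable (C : Type u) [Category.{v} C] [Preadditive C] [HasZeroObject C] [HasShift C ℤ]
  [∀ n : ℤ, (shiftFunctor C n).Additive] [Pretriangulated C]

variable {C}

/-- An object `P` is projective for the ideal `J = ker F`: every morphism out of `P` lying in
the ideal vanishes. -/
def IsKerProjective {C' : Type u'} [Category.{v} C'] [Preadditive C'] (F : C ⥤ C') (P : C) : Prop :=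
  ∀ (X : C) (g : P ⟶ X), F.map g = 0 → g = 0

/-- A morphism `π : P ⟶ B` is `ker F`-epic: in an exact triangle `P → B → Z → ΣP`, the
morphism `B → Z` is killed by `F`. -/
def IsKerEpi {C' : Type u'} [Category.{v} C'] [Preadditive C'] (F : C ⥤ C') {P B : C} (π : P ⟶ B) : Prop :=
  ∀ (Z : C) (a : B ⟶ Z) (b : Z ⟶ P⟦(1 : ℤ)⟧),
    Triangle.mk π a b ∈ (distTriang C) → F.map a = 0

end

theorem ker_ideal_enough_projectives_of_adjunction
    {C : Type u} [Category.{v} C] [Preadditive C] [HasZeroObject C] [HasShift C ℤ]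
      [∀ n : ℤ, (shiftFunctor C n).Additive] [Pretriangulated C]
    {C' : Type u'} [Category.{v} C'] [Preadditive C'] [HasZeroObject C'] [HasShift C' ℤ]
      [∀ n : ℤ, (shiftFunctor C' n).Additive] [Pretriangulated C']
    -- countable direct sums
    [HasCoproductsOfShape ℕ C] [HasCoproductsOfShape ℕ C']
    -- the triangulated functor F with triangulated left adjoint E
    (F : C ⥤ C') [F.CommShift ℤ] [F.IsTriangulated]
    (E : C' ⥤ C) [E.CommShift ℤ] [E.IsTriangulated]
    (adj : E ⊣ F)
    -- compatibility with countable direct sums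
    [PreservesColimitsOfShape (Discrete ℕ) F] [PreservesColimitsOfShape (Discrete ℕ) E] :
    -- 𝔍 = ker F has enough projectives ...
    (∀ B : C, ∃ (P : C) (π : P ⟶ B), IsKerProjective F P ∧ IsKerEpi F π) ∧
    -- ... and the 𝔍-projectives are exactly the direct summands of objects E(A)
    (∀ P : C, IsKerProjective F P ↔
      ∃ (A : C') (i : P ⟶ E.obj A) (r : E.obj A ⟶ P), i ≫ r = 𝟙 P) := by
  -- E(A) is always ker-F-projective
  have hEproj : ∀ A : C', IsKerProjective F (E.obj A) := by
    intro A X g hg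
    apply (adj.homEquiv A X).injective
    simp [Adjunction.homEquiv_unit, hg]
  -- the counit is a ker-F-epi
  have hEpi : ∀ B : C, IsKerEpi F (adj.counit.app B) := by
    intro B Z a b hT
    have h0 : adj.counit.app B ≫ a = 0 := comp_distTriang_mor_zero₁₂ _ hT
    have h1 : F.map (adj.counit.app B) ≫ F.map a = 0 := by
      rw [← F.map_comp, h0, F.map_zero]
    have h2 : adj.unit.app (F.obj B) ≫ F.map (adj.counit.app B) = 𝟙 _ :=
      adj.right_triangle_components B
    calc F.map a = (adj.unit.app (F.obj B) ≫ F.map (adj.counit.app B)) ≫ F.map a := by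
          rw [h2, Category.id_comp]
      _ = adj.unit.app (F.obj B) ≫ (F.map (adj.counit.app B) ≫ F.map a) := by
          rw [Category.assoc]
      _ = 0 := by rw [h1, comp_zero]
  constructor
  · intro B
    exact ⟨E.obj (F.obj B), adj.counit.app B, hEproj _, hEpi B⟩
  · intro P
    constructor
    · intro hP
      obtain ⟨Z, a, b, hT⟩ := Pretriangulated.distinguished_cocone_triangle (adj.counit.app P)
      have ha : a = 0 := hP Z a (hEpi P Z a b hT)
      obtain ⟨i, hi⟩ := Pretriangulated.Triangle.coyoneda_exact₂ _ hT (𝟙 P)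
        (by simp [ha]; exact comp_zero)
      exact ⟨F.obj P, i, adj.counit.app P, hi.symm⟩
    · rintro ⟨A, i, r, hir⟩ X g hg
      have hr : r ≫ g = 0 := hEproj A X (r ≫ g) (by rw [F.map_comp, hg, comp_zero])
      calc g = (i ≫ r) ≫ g := by rw [hir, Category.id_comp]
        _ = i ≫ (r ≫ g) := Category.assoc _ _ _
        _ = 0 := by rw [hr, comp_zero]
end

section
/- Let F: 𝔗 → 𝔗' be a triangulated functor between triangulated categories with left adjoint E, and 𝔍 = ker F. Then for each object B ∈ 𝔗 the augmented complex ⋯ → (EF)^{n+1}B → ⋯ → (EF)^2 B → EF B → B, with boundary maps δ_n = Σ_{i=0}^n (−EF)^i(ε_{(EF)^{n−i}B}) and augmentation ε_B, is an 𝔍-projective resolution of B, natural in B. -/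
/-!
STATEMENT 6: For a triangulated functor F : 𝔗 → 𝔗' with left adjoint E and 𝔍 = ker F, the
augmented complex ⋯ → (EF)^{n+1}B → ⋯ → (EF)²B → EF B → B with boundary maps
δ_n = Σ_{i=0}^n (−EF)^i(ε_{(EF)^{n−i}B}) and augmentation ε_B is a 𝔍-projective resolution of
B, natural in B.
-/

open CategoryTheory Limits Pretriangulated

universe v u u'

section

variable {C : Type u} [Category.{v} C] [Preadditive C] [HasZeroObject C] [HasShift C ℤ]
  [∀ n : ℤ, (shiftFunctor C n).Additive] [Pretriangulated C]

/-- 𝔍-exactness of a pair of consecutive differentials. -/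
def JExactPair (J : CategoryTheory.MorphismProperty C) {X Y Z : C}
    (f : X ⟶ Y) (g : Y ⟶ Z) : Prop :=
  ∀ (Cg : C) (a : Z ⟶ Cg) (b : Cg ⟶ Y⟦(1 : ℤ)⟧), Triangle.mk g a b ∈ (distTriang C) →
  ∀ (Cf : C) (a' : Y ⟶ Cf) (b' : Cf ⟶ X⟦(1 : ℤ)⟧), Triangle.mk f a' b' ∈ (distTriang C) →
    J (b ≫ (shiftFunctor C (1 : ℤ)).map a')

/-- A morphism `π : P ⟶ A` is 𝔍-epic. -/
def IsJEpi (J : CategoryTheory.MorphismProperty C) {P A : C} (π : P ⟶ A) : Prop :=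
  ∀ (Z : C) (a : A ⟶ Z) (b : Z ⟶ P⟦(1 : ℤ)⟧),
    Triangle.mk π a b ∈ (distTriang C) → J a

/-- An object `P` is 𝔍-projective. -/
def IsJProjective (J : CategoryTheory.MorphismProperty C) (P : C) : Prop :=
  ∀ (X : C) (g : P ⟶ X), J g → g = 0

/-- The homological ideal `ker F` of morphisms annihilated by `F`. -/
def kerIdeal {C' : Type u'} [Category.{v} C'] [Preadditive C'] (F : C ⥤ C') :
    CategoryTheory.MorphismProperty C :=
  fun _ _ f => F.map f = 0

end

section

variable {C : Type u} [Category.{v} C] [Preadditive C]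

/-- The action of the `n`-fold power of an endofunctor on morphisms. -/
def iterMap (G : C ⥤ C) : ∀ (n : ℕ) {X Y : C}, (X ⟶ Y) → ((G.obj)^[n] X ⟶ (G.obj)^[n] Y)
  | 0, _, _, f => f
  | (n + 1), _, _, f => iterMap G n (G.map f)

/-- The boundary map `δ_n = Σ_{i=0}^n (−EF)^i(ε_{(EF)^{n−i}B})` of the canonical resolution
associated to an endofunctor `G = EF` with counit `ε : G ⟶ 𝟭`. -/
noncomputable def deltaMap (G : C ⥤ C) (ε : G ⟶ 𝟭 C) (B : C) (n : ℕ) :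
    (G.obj)^[n + 1] B ⟶ (G.obj)^[n] B :=
  ∑ i : Fin (n + 1),
    ((-1 : ℤ) ^ (i : ℕ)) •
      (eqToHom (show (G.obj)^[n + 1] B = (G.obj)^[(i : ℕ)] (G.obj ((G.obj)^[n - (i : ℕ)] B)) by
          have hi : (i : ℕ) < n + 1 := i.isLt
          have h : (i : ℕ) + (n - (i : ℕ) + 1) = n + 1 := by omega
          conv_lhs => rw [← h, Function.iterate_add_apply]
          rw [Function.iterate_succ_apply']) ≫
        iterMap G (i : ℕ) (ε.app ((G.obj)^[n - (i : ℕ)] B)) ≫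
        eqToHom (show (G.obj)^[(i : ℕ)] ((G.obj)^[n - (i : ℕ)] B) = (G.obj)^[n] B by
          have hi : (i : ℕ) < n + 1 := i.isLt
          have h : (i : ℕ) + (n - (i : ℕ)) = n := by omega
          rw [← Function.iterate_add_apply, h]))

end


section
set_option linter.unusedSectionVars false

variable {C : Type u} [Category.{v} C] [Preadditive C]
variable (G : C ⥤ C) (ε : G ⟶ 𝟭 C)

/-- `G^{n+1}(ε_B)`, typed as a map `G^{n+1}(GB) ⟶ G^n(GB)`. -/
def iota (n : ℕ) (B : C) : (G.obj)^[n + 1] (G.obj B) ⟶ (G.obj)^[n] (G.obj B) :=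
  iterMap G (n + 1) (ε.app B)

lemma iterMap_comp (n : ℕ) : ∀ {X Y Z : C} (f : X ⟶ Y) (g : Y ⟶ Z),
    iterMap G n (f ≫ g) = iterMap G n f ≫ iterMap G n g := by
  induction n with
  | zero => intro X Y Z f g; rfl
  | succ n ih => intro X Y Z f g; simp only [iterMap, G.map_comp, ih]; rfl

lemma counit_iterMap_congr (n : ℕ) {X Y : C} (h : X = Y) :
    iterMap G n (ε.app X) = eqToHom (by rw [h]) ≫ iterMap G n (ε.app Y) ≫ eqToHom (by rw [h]) := by
  subst h; simp

lemma map_iterMap (n : ℕ) : ∀ {X Y : C} (h : X ⟶ Y),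
    G.map (iterMap G n h) = eqToHom (Function.iterate_succ_apply' G.obj n X).symm ≫
      iterMap G (n + 1) h ≫ eqToHom (Function.iterate_succ_apply' G.obj n Y) := by
  induction n with
  | zero =>
      intro X Y h
      exact (by simp : G.map h = 𝟙 _ ≫ G.map h ≫ 𝟙 _)
  | succ n ih =>
      intro X Y h
      exact ih (G.map h)

lemma delta_zero (B : C) : deltaMap G ε B 0 = ε.app B := by
  rw [deltaMap, Fin.sum_univ_one]
  exact (by simp : ((-1 : ℤ) ^ (0:ℕ)) • (𝟙 _ ≫ ε.app B ≫ 𝟙 _) = ε.app B)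

lemma delta_succ (B : C) (n : ℕ) :
    deltaMap G ε B (n + 1)
      = deltaMap G ε (G.obj B) n + ((-1 : ℤ) ^ (n + 1)) • iota G ε n B := by
  rw [deltaMap, deltaMap, Fin.sum_univ_castSucc]
  congr 1
  · apply Finset.sum_congr rfl
    intro i _
    have h : (G.obj)^[(n+1) - ((i.castSucc : Fin (n+2)) : ℕ)] B
        = (G.obj)^[n - (i : ℕ)] (G.obj B) := by
      have h1 : (n+1) - ((i.castSucc : Fin (n+2)) : ℕ) = (n - (i:ℕ)) + 1 := by
        simp only [Fin.coe_castSucc]; omega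
      rw [h1, Function.iterate_succ_apply]
    rw [counit_iterMap_congr G ε _ h]
    simp only [Category.assoc, eqToHom_trans, eqToHom_trans_assoc, Fin.coe_castSucc]
    rfl
  · have h : (G.obj)^[(n+1) - ((Fin.last (n+1) : Fin (n+2)) : ℕ)] B = B := by
      simp
    rw [counit_iterMap_congr G ε _ h]
    simp only [Category.assoc, eqToHom_trans, eqToHom_trans_assoc, Fin.val_last]
    exact (by simp; erw [Category.comp_id] :
      ((-1:ℤ)^(n+1)) • (𝟙 ((G.obj)^[n+1] (G.obj B)) ≫ iterMap G (n+1) (ε.app B)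
          ≫ 𝟙 ((G.obj)^[n+1] ((𝟭 C).obj B)))
        = ((-1:ℤ)^(n+1)) • iterMap G (n+1) (ε.app B))

lemma delta_natural : ∀ (n : ℕ) {B B₂ : C} (b : B ⟶ B₂),
    iterMap G (n + 1) b ≫ deltaMap G ε B₂ n = deltaMap G ε B n ≫ iterMap G n b := by
  intro n
  induction n with
  | zero =>
      intro B B₂ b
      rw [delta_zero, delta_zero]
      exact ε.naturality b
  | succ n ih =>
      intro B B₂ b
      have h1 : G.map b ≫ ε.app B₂ = ε.app B ≫ b := by simpa using ε.naturality b
      have e1 : iterMap G (n + 1 + 1) b ≫ deltaMap G ε (G.obj B₂) n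
          = deltaMap G ε (G.obj B) n ≫ iterMap G (n + 1) b := ih (G.map b)
      have e2 : iterMap G (n + 1 + 1) b ≫ iterMap G (n + 1) (ε.app B₂)
          = iterMap G (n + 1) (ε.app B) ≫ iterMap G (n + 1) b := by
        calc iterMap G (n + 1) (G.map b) ≫ iterMap G (n + 1) (ε.app B₂)
            = iterMap G (n + 1) (G.map b ≫ ε.app B₂) :=
              (iterMap_comp G (n + 1) (G.map b) (ε.app B₂)).symm
          _ = iterMap G (n + 1) (ε.app B ≫ b) := by rw [h1]
          _ = iterMap G (n + 1) (ε.app B) ≫ iterMap G (n + 1) b :=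
              iterMap_comp G (n + 1) (ε.app B) b
      erw [delta_succ, delta_succ, Preadditive.comp_add, Preadditive.add_comp,
        Preadditive.comp_zsmul, Preadditive.zsmul_comp, e1]
      congr 1
      exact congrArg (fun x => ((-1 : ℤ) ^ (n + 1)) • x) e2

lemma delta_delta : ∀ (n : ℕ) (B : C),
    deltaMap G ε B (n + 1) ≫ deltaMap G ε B n = 0 := by
  intro n
  induction n with
  | zero =>
      intro B
      have w : iota G ε 0 B ≫ deltaMap G ε B 0 = deltaMap G ε (G.obj B) 0 ≫ ε.app B :=
        delta_natural G ε 0 (ε.app B)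
      erw [delta_succ G ε B 0, Preadditive.add_comp, Preadditive.zsmul_comp, w,
        delta_zero G ε B]
      simp
      erw [neg_one_smul ℤ, add_neg_cancel]
      rfl
  | succ n ih =>
      intro B
      have w : iota G ε (n + 1) B ≫ deltaMap G ε B (n + 1)
          = deltaMap G ε (G.obj B) (n + 1) ≫ iota G ε n B :=
        delta_natural G ε (n + 1) (ε.app B)
      erw [delta_succ G ε B (n + 1), Preadditive.add_comp, Preadditive.zsmul_comp, w,
        delta_succ G ε B n, Preadditive.comp_add, Preadditive.comp_zsmul, ih (G.obj B),
        zero_add, ← add_smul]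
      have hc : ((-1:ℤ)^(n+1)) + ((-1:ℤ)^(n+1+1)) = 0 := by ring
      rw [hc, zero_smul]

end

section
variable {C : Type u} [Category.{v} C] [Preadditive C]
  {C' : Type u'} [Category.{v} C'] [Preadditive C']
  (F : C ⥤ C') (E : C' ⥤ C) (adj : E ⊣ F)

/-- The contracting homotopy `η` on the image of the canonical resolution under `F`. -/
noncomputable def sMap (n : ℕ) (B : C) :
    F.obj ((F ⋙ E).obj^[n] B) ⟶ F.obj ((F ⋙ E).obj^[n + 1] B) :=
  adj.unit.app (F.obj ((F ⋙ E).obj^[n] B)) ≫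
    eqToHom (congrArg F.obj (Function.iterate_succ_apply' (F ⋙ E).obj n B).symm)

lemma sMap_succ (n : ℕ) (B : C) :
    sMap F E adj (n + 1) B = sMap F E adj n ((F ⋙ E).obj B) := rfl

lemma s_tri (X : C) :
    sMap F E adj 0 X ≫ F.map (deltaMap (F ⋙ E) adj.counit X 0) = 𝟙 (F.obj X) := by
  rw [delta_zero]
  exact (by simpa using adj.right_triangle_components X :
    (adj.unit.app (F.obj X) ≫ 𝟙 (F.obj ((F ⋙ E).obj X))) ≫ F.map (adj.counit.app X)
      = 𝟙 (F.obj X))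

lemma sMap_natural (n : ℕ) {X Y : C} (h : X ⟶ Y) :
    F.map (iterMap (F ⋙ E) n h) ≫ sMap F E adj n Y
      = sMap F E adj n X ≫ F.map (iterMap (F ⋙ E) (n + 1) h) := by
  have nat : F.map (iterMap (F ⋙ E) n h) ≫ adj.unit.app (F.obj ((F ⋙ E).obj^[n] Y))
      = adj.unit.app (F.obj ((F ⋙ E).obj^[n] X))
        ≫ F.map ((F ⋙ E).map (iterMap (F ⋙ E) n h)) :=
    adj.unit.naturality (F.map (iterMap (F ⋙ E) n h))
  rw [sMap, sMap, ← Category.assoc, nat, Category.assoc,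
    map_iterMap (F ⋙ E) n h, F.map_comp, F.map_comp, eqToHom_map, eqToHom_map]
  simp only [Category.assoc, eqToHom_trans, eqToHom_refl, Category.comp_id]

variable [F.Additive]

lemma homotopy : ∀ (n : ℕ) (B : C),
    sMap F E adj (n + 1) B ≫ F.map (deltaMap (F ⋙ E) adj.counit B (n + 1))
      + F.map (deltaMap (F ⋙ E) adj.counit B n) ≫ sMap F E adj n B
      = 𝟙 (F.obj ((F ⋙ E).obj^[n + 1] B)) := by
  intro n
  induction n with
  | zero =>
      intro B
      erw [delta_succ (F ⋙ E) adj.counit B 0, delta_zero (F ⋙ E) adj.counit B,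
        F.map_add, Functor.map_zsmul, Preadditive.comp_add, Preadditive.comp_zsmul,
        sMap_succ F E adj 0 B]
      have h2 : F.map (adj.counit.app B) ≫ sMap F E adj 0 B
          = sMap F E adj 0 ((F ⋙ E).obj B) ≫ F.map (iota (F ⋙ E) adj.counit 0 B) :=
        sMap_natural F E adj 0 (adj.counit.app B)
      erw [s_tri F E adj ((F ⋙ E).obj B), h2, add_assoc]
      simp
      erw [neg_one_smul ℤ, neg_add_cancel]
      exact add_zero _
  | succ n ih =>
      intro B
      erw [delta_succ (F ⋙ E) adj.counit B (n + 1), delta_succ (F ⋙ E) adj.counit B n,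
        F.map_add, F.map_add, Functor.map_zsmul, Functor.map_zsmul,
        Preadditive.comp_add, Preadditive.comp_zsmul,
        Preadditive.add_comp, Preadditive.zsmul_comp,
        sMap_succ F E adj (n + 1) B, sMap_succ F E adj n B]
      have h2 : F.map (iota (F ⋙ E) adj.counit n B) ≫ sMap F E adj n ((F ⋙ E).obj B)
          = sMap F E adj (n + 1) ((F ⋙ E).obj B)
            ≫ F.map (iota (F ⋙ E) adj.counit (n + 1) B) :=
        sMap_natural F E adj (n + 1) (adj.counit.app B)
      erw [h2, add_add_add_comm, ih ((F ⋙ E).obj B), ← add_smul]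
      have hc : ((-1:ℤ)^(n + 1 + 1)) + ((-1:ℤ)^(n + 1)) = 0 := by ring
      erw [hc, zero_smul, add_zero]
      rfl

end


theorem canonical_adjunction_resolution
    {C : Type u} [Category.{v} C] [Preadditive C] [HasZeroObject C] [HasShift C ℤ]
      [∀ n : ℤ, (shiftFunctor C n).Additive] [Pretriangulated C]
    {C' : Type u'} [Category.{v} C'] [Preadditive C'] [HasZeroObject C'] [HasShift C' ℤ]
      [∀ n : ℤ, (shiftFunctor C' n).Additive] [Pretriangulated C']
    -- countable direct sums and compatibility of the adjunction with them
    [HasCoproductsOfShape ℕ C] [HasCoproductsOfShape ℕ C']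
    (F : C ⥤ C') [F.CommShift ℤ] [F.IsTriangulated]
    (E : C' ⥤ C) [E.CommShift ℤ] [E.IsTriangulated]
    (adj : E ⊣ F)
    [PreservesColimitsOfShape (Discrete ℕ) F] [PreservesColimitsOfShape (Discrete ℕ) E]
    (B : C) :
    -- each term (EF)^{n+1} B is (ker F)-projective
    (∀ n : ℕ, IsJProjective (kerIdeal F) (((F ⋙ E).obj)^[n + 1] B)) ∧
    -- the augmentation is δ₀ = ε_B
    (deltaMap (F ⋙ E) adj.counit B 0 = adj.counit.app B) ∧
    -- the boundary maps form a chain complex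
    (∀ n : ℕ, deltaMap (F ⋙ E) adj.counit B (n + 1) ≫ deltaMap (F ⋙ E) adj.counit B n = 0) ∧
    -- the augmented complex is (ker F)-exact: the augmentation is (ker F)-epic and each pair
    -- of consecutive boundary maps is (ker F)-exact
    IsJEpi (kerIdeal F) (deltaMap (F ⋙ E) adj.counit B 0) ∧
    (∀ n : ℕ, JExactPair (kerIdeal F)
      (deltaMap (F ⋙ E) adj.counit B (n + 1)) (deltaMap (F ⋙ E) adj.counit B n)) ∧
    -- naturality in B
    (∀ (B₂ : C) (b : B ⟶ B₂) (n : ℕ),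
      iterMap (F ⋙ E) (n + 1) b ≫ deltaMap (F ⋙ E) adj.counit B₂ n
        = deltaMap (F ⋙ E) adj.counit B n ≫ iterMap (F ⋙ E) n b) := by
  have proj : ∀ (A : C'), IsJProjective (kerIdeal F) (E.obj A) := by
    intro A X g hg
    have hg' : F.map g = 0 := hg
    calc g = (adj.homEquiv A X).symm (adj.homEquiv A X g) :=
            ((adj.homEquiv A X).symm_apply_apply g).symm
      _ = (adj.homEquiv A X).symm (adj.unit.app A ≫ F.map g) := by rw [adj.homEquiv_unit]
      _ = (adj.homEquiv A X).symm 0 := by rw [hg', Limits.comp_zero]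
      _ = 0 := by rw [adj.homEquiv_counit]; simp
  refine ⟨?_, delta_zero _ _ B, fun n => delta_delta _ _ n B, ?_, ?_, ?_⟩
  · -- projectivity of the terms
    intro n
    rw [Function.iterate_succ_apply']
    exact proj (F.obj (((F ⋙ E).obj)^[n] B))
  · -- J-epi
    intro Z a b hT
    have h0 : deltaMap (F ⋙ E) adj.counit B 0 ≫ a = 0 :=
      comp_distTriang_mor_zero₁₂ _ hT
    have h1 : F.map (deltaMap (F ⋙ E) adj.counit B 0) ≫ F.map a = 0 := by
      rw [← F.map_comp, h0, F.map_zero]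
    show F.map a = 0
    have h2 : sMap F E adj 0 B ≫ F.map (deltaMap (F ⋙ E) adj.counit B 0)
        = 𝟙 (F.obj (((F ⋙ E).obj)^[0] B)) := s_tri F E adj B
    calc F.map a
        = 𝟙 (F.obj (((F ⋙ E).obj)^[0] B)) ≫ F.map a := (Category.id_comp _).symm
      _ = (sMap F E adj 0 B ≫ F.map (deltaMap (F ⋙ E) adj.counit B 0)) ≫ F.map a := by
          rw [h2]
      _ = sMap F E adj 0 B ≫ (F.map (deltaMap (F ⋙ E) adj.counit B 0) ≫ F.map a) := by
          rw [Category.assoc]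
      _ = 0 := by rw [h1, Limits.comp_zero]
  · -- J-exactness
    intro n Cg a b hTg Cf a' b' hTf
    have hba : b ≫ (shiftFunctor C (1:ℤ)).map (deltaMap (F ⋙ E) adj.counit B n) = 0 :=
      comp_distTriang_mor_zero₃₁ _ hTg
    have hfa : deltaMap (F ⋙ E) adj.counit B (n + 1) ≫ a' = 0 :=
      comp_distTriang_mor_zero₁₂ _ hTf
    have hw : F.map a' = F.map (deltaMap (F ⋙ E) adj.counit B n)
        ≫ (sMap F E adj n B ≫ F.map a') := by
      have hT := homotopy F E adj n B
      have key : (sMap F E adj (n+1) B ≫ F.map (deltaMap (F ⋙ E) adj.counit B (n+1))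
          + F.map (deltaMap (F ⋙ E) adj.counit B n) ≫ sMap F E adj n B) ≫ F.map a'
          = F.map a' := by rw [hT, Category.id_comp]
      rw [Preadditive.add_comp, Category.assoc, Category.assoc, ← F.map_comp, hfa,
        F.map_zero, Limits.comp_zero, zero_add] at key
      exact key.symm
    show F.map (b ≫ (shiftFunctor C (1:ℤ)).map a') = 0
    have nat1 : F.map ((shiftFunctor C (1:ℤ)).map a')
        = (F.commShiftIso (1:ℤ)).hom.app (((F ⋙ E).obj)^[n+1] B)
          ≫ (shiftFunctor C' (1:ℤ)).map (F.map a')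
          ≫ (F.commShiftIso (1:ℤ)).inv.app Cf := by
      have h := (F.commShiftIso (1:ℤ)).hom.naturality a'
      simp only [Functor.comp_map] at h
      rw [← Category.assoc, ← h, Category.assoc, Iso.hom_inv_id_app, Category.comp_id]
    have nat2 : (F.commShiftIso (1:ℤ)).hom.app (((F ⋙ E).obj)^[n+1] B)
          ≫ (shiftFunctor C' (1:ℤ)).map (F.map (deltaMap (F ⋙ E) adj.counit B n))
        = F.map ((shiftFunctor C (1:ℤ)).map (deltaMap (F ⋙ E) adj.counit B n))
          ≫ (F.commShiftIso (1:ℤ)).hom.app (((F ⋙ E).obj)^[n] B) := by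
      have h := (F.commShiftIso (1:ℤ)).hom.naturality (deltaMap (F ⋙ E) adj.counit B n)
      simp only [Functor.comp_map] at h
      exact h.symm
    rw [F.map_comp, nat1, hw, Functor.map_comp (shiftFunctor C' (1:ℤ))]
    slice_lhs 2 3 => rw [nat2]
    slice_lhs 1 2 => rw [← F.map_comp, hba, F.map_zero]
    simp
  · -- naturality
    intro B₂ b n
    exact delta_natural (F ⋙ E) adj.counit n b
end

section
/- Let P be a proper étale groupoid (the map (r,s): P → P⁰ × P⁰ is proper) and let O ⊆ P be an open subset containing the isotropy group P^x_x at a point x ∈ P⁰. Then there is an open neighbourhood U ⊆ P⁰ of x such that the restriction P|_U = { p ∈ P : r(p) ∈ U and s(p) ∈ U } is contained in O. -/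
/-- An étale groupoid: a topological groupoid (encoded on its arrow space `A`, with units the
fixed points of the source map) whose range and source maps are local homeomorphisms. -/
structure EtaleGroupoid (A : Type*) [TopologicalSpace A] where
  r : A → A
  s : A → A
  mul : ∀ g h : A, s g = r h → A
  inv : A → A
  s_r : ∀ g, s (r g) = r g
  r_r : ∀ g, r (r g) = r g
  r_s : ∀ g, r (s g) = s g
  s_s : ∀ g, s (s g) = s g
  r_mul : ∀ (g h) (e : s g = r h), r (mul g h e) = r g
  s_mul : ∀ (g h) (e : s g = r h), s (mul g h e) = s h
  mul_assoc : ∀ (g h k) (e₁ : s g = r h) (e₂' : s h = r k)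
      (e₂ : s (mul g h e₁) = r k) (e₁' : s g = r (mul h k e₂')),
      mul (mul g h e₁) k e₂ = mul g (mul h k e₂') e₁'
  id_mul : ∀ g, mul (r g) g (s_r g) = g
  mul_id : ∀ (g) (e : s g = r (s g)), mul g (s g) e = g
  r_inv : ∀ g, r (inv g) = s g
  s_inv : ∀ g, s (inv g) = r g
  mul_inv : ∀ (g) (e : s g = r (inv g)), mul g (inv g) e = r g
  inv_mul : ∀ (g) (e : s (inv g) = r g), mul (inv g) g e = s g
  continuous_r : Continuous r
  continuous_s : Continuous s
  continuous_inv : Continuous inv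
  continuous_mul : Continuous fun p : {p : A × A // s p.1 = r p.2} => mul p.1.1 p.1.2 p.2
  etale_r : IsLocalHomeomorph r
  etale_s : IsLocalHomeomorph s

namespace EtaleGroupoid

variable {A : Type*} [TopologicalSpace A] (G : EtaleGroupoid A)

/-- The unit space of the groupoid, as a subset of the arrow space. -/
def unitSet : Set A := {a | G.s a = a}

lemma r_mem_unitSet (g : A) : G.r g ∈ G.unitSet := G.s_r g

lemma s_mem_unitSet (g : A) : G.s g ∈ G.unitSet := G.s_s g

end EtaleGroupoid

/-! The map `p ↦ (r p, s p)` is closed, so the set of pairs of units whose whole fibre lies in the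
open set `O` is a neighbourhood of `(x, x)`; a square `U × U` inside it gives `P|_U ⊆ O`. -/

open Filter Topology

lemma exists_isOpen_mem_and_prod_preimage_val_subset {X : Type*} [TopologicalSpace X]
    {S : Set X} {a : X} (ha : a ∈ S) {V : Set (S × S)} (hV : V ∈ 𝓝 (⟨a, ha⟩, ⟨a, ha⟩)) :
    ∃ U : Set X, IsOpen U ∧ a ∈ U ∧ (Subtype.val ⁻¹' U) ×ˢ (Subtype.val ⁻¹' U) ⊆ V := by
  rw [nhds_prod_eq, mem_prod_self_iff] at hV
  obtain ⟨W, hW, hWV⟩ := hV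
  obtain ⟨N, hN, hNW⟩ := (mem_nhds_subtype S _ W).mp hW
  obtain ⟨U, hUN, hU, haU⟩ := mem_nhds_iff.mp hN
  have hUW : Subtype.val ⁻¹' U ⊆ W := (Set.preimage_mono hUN).trans hNW
  exact ⟨U, hU, haU, (Set.prod_mono hUW hUW).trans hWV⟩

namespace EtaleGroupoid

variable {A : Type*} [TopologicalSpace A] (P : EtaleGroupoid A)

def rangeSource (p : A) : P.unitSet × P.unitSet :=
  (⟨P.r p, P.r_mem_unitSet p⟩, ⟨P.s p, P.s_mem_unitSet p⟩)

lemma rangeSource_eq_iff {p x : A} (hx : x ∈ P.unitSet) :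
    P.rangeSource p = (⟨x, hx⟩, ⟨x, hx⟩) ↔ P.r p = x ∧ P.s p = x := by
  simp only [rangeSource, Prod.ext_iff, Subtype.ext_iff]

end EtaleGroupoid

theorem proper_etale_groupoid_restriction_in_open_general
    {A : Type*} [TopologicalSpace A] (P : EtaleGroupoid A)
    -- properness: (r, s) : P → P⁰ × P⁰ is a proper map
    (hproper : IsProperMap (fun p : A =>
      ((⟨P.r p, P.r_mem_unitSet p⟩ : ↥P.unitSet), (⟨P.s p, P.s_mem_unitSet p⟩ : ↥P.unitSet))))
    (x : A) (hx : x ∈ P.unitSet)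
    (O : Set A) (hO : IsOpen O)
    (hiso : {p : A | P.r p = x ∧ P.s p = x} ⊆ O) :
    ∃ U : Set A, IsOpen U ∧ x ∈ U ∧
      {p : A | P.r p ∈ U ∧ P.s p ∈ U} ⊆ O := by
  have hclosed : IsClosedMap P.rangeSource := hproper.isClosedMap
  have hfibres : ∀ᶠ y in 𝓝 (⟨x, hx⟩, ⟨x, hx⟩), P.rangeSource ⁻¹' {y} ⊆ O :=
    hclosed.eventually_nhds_fiber _ fun p hp ↦
      hO.mem_nhds (hiso ((P.rangeSource_eq_iff hx).mp hp))
  obtain ⟨U, hU, hxU, hUfibres⟩ := exists_isOpen_mem_and_prod_preimage_val_subset hx hfibres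
  exact ⟨U, hU, hxU, fun p hp ↦ hUfibres (Set.mk_mem_prod hp.1 hp.2) rfl⟩

theorem proper_etale_groupoid_restriction_in_open
    {A : Type*} [TopologicalSpace A] (P : EtaleGroupoid A)
    -- the unit space is locally compact Hausdorff
    [T2Space ↥P.unitSet] [LocallyCompactSpace ↥P.unitSet]
    -- properness: (r, s) : P → P⁰ × P⁰ is a proper map
    (hproper : IsProperMap (fun p : A =>
      ((⟨P.r p, P.r_mem_unitSet p⟩ : ↥P.unitSet), (⟨P.s p, P.s_mem_unitSet p⟩ : ↥P.unitSet))))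
    (x : A) (hx : x ∈ P.unitSet)
    (O : Set A) (hO : IsOpen O)
    (hiso : {p : A | P.r p = x ∧ P.s p = x} ⊆ O) :
    ∃ U : Set A, IsOpen U ∧ x ∈ U ∧
      {p : A | P.r p ∈ U ∧ P.s p ∈ U} ⊆ O :=
  proper_etale_groupoid_restriction_in_open_general P hproper x hx O hO hiso
end

section
/- Let (C, D, i, j, k) be an exact couple of bigraded abelian groups with deg i = (1,−1), deg j = (0,0), deg k = (−1,0), and let E^∞_{p,q} = (⋂_{r≥1} k^{-1}(im i^r))_{p,q} / (⋃_{r≥1} j(ker i^r))_{p,q} be the limit sheet of the associated spectral sequence. Then for p ≥ 0 and q ∈ ℤ there is a well-defined homomorphism ψ_{p,q}: E^∞_{p,q} → (ker i^{p+1})_{−1,p+q} / (ker i^{p})_{−1,p+q} such that i^p ∘ ψ_{p,q} agrees with the map induced by k on ⋂_{r≥1} k^{-1}(im i^r)_{p,q}. -/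
/-!
STATEMENT 10: For an exact couple (C, D, i, j, k) of bigraded abelian groups with
deg i = (1,−1), deg j = (0,0), deg k = (−1,0), and the limit sheet
E^∞_{p,q} = (⋂_{r≥1} k⁻¹(im i^r))_{p,q} / (⋃_{r≥1} j(ker i^r))_{p,q}, for p ≥ 0 there is a
well-defined homomorphism ψ_{p,q} : E^∞_{p,q} → (ker i^{p+1})_{−1,p+q}/(ker i^p)_{−1,p+q}
such that i^p ∘ ψ_{p,q} agrees with the map induced by k.
-/

universe u

section

variable (D : ℤ × ℤ → Type u) [∀ a, AddCommGroup (D a)]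

/-- Transport along an equality of bidegrees. -/
def dcast : ∀ {a b : ℤ × ℤ}, a = b → D a →+ D b
  | _, _, rfl => AddMonoidHom.id _

/-- The `r`-fold iterate `i^r : D_{p,q} → D_{p+r,q−r}` of the degree (1,−1) map `i`. -/
def iPow (i : ∀ a : ℤ × ℤ, D a →+ D (a.1 + 1, a.2 - 1)) :
    ∀ (r : ℕ) (a : ℤ × ℤ), D a →+ D (a.1 + r, a.2 - r)
  | 0, a => dcast D (by simp)
  | (r + 1), a =>
      (dcast D (by simp only [Prod.mk.injEq]; push_cast; constructor <;> ring)).comp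
        ((i (a.1 + r, a.2 - r)).comp (iPow i r a))

end

section AuxLemmas

variable (D : ℤ × ℤ → Type u) [∀ a, AddCommGroup (D a)]

@[simp] lemma dcast_refl {a : ℤ × ℤ} (h : a = a) (x : D a) : dcast D h x = x := rfl

lemma dcast_dcast {a b c : ℤ × ℤ} (h1 : a = b) (h2 : b = c) (x : D a) :
    dcast D h2 (dcast D h1 x) = dcast D (h1.trans h2) x := by subst h1; subst h2; rfl

lemma dcast_eq_zero {a b : ℤ × ℤ} (h : a = b) (x : D a) : dcast D h x = 0 ↔ x = 0 := by
  subst h; exact Iff.rfl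

lemma dcast_eq_iff {a b : ℤ × ℤ} (h : a = b) (x : D a) (y : D b) :
    dcast D h x = y ↔ x = dcast D h.symm y := by subst h; exact Iff.rfl

lemma dcast_inj {a b : ℤ × ℤ} (h : a = b) (x y : D a) :
    dcast D h x = dcast D h y ↔ x = y := by subst h; exact Iff.rfl

variable (i : ∀ a : ℤ × ℤ, D a →+ D (a.1 + 1, a.2 - 1))

lemma i_dcast {a b : ℤ × ℤ} (h : a = b) (h' : (a.1 + 1, a.2 - 1) = (b.1 + 1, b.2 - 1))
    (x : D a) : i b (dcast D h x) = dcast D h' (i a x) := by subst h; rfl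

lemma k_dcast (C : ℤ × ℤ → Type u) [∀ a, AddCommGroup (C a)]
    (k : ∀ a : ℤ × ℤ, C a →+ D (a.1 - 1, a.2)) {a b : ℤ × ℤ} (h : a = b)
    (h' : (a.1 - 1, a.2) = (b.1 - 1, b.2)) (x : C a) :
    k b (dcast C h x) = dcast D h' (k a x) := by subst h; rfl

lemma iPow_dcast (r : ℕ) {a b : ℤ × ℤ} (h : a = b)
    (h' : (a.1 + r, a.2 - r) = (b.1 + r, b.2 - r)) (x : D a) :
    iPow D i r b (dcast D h x) = dcast D h' (iPow D i r a x) := by subst h; rfl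

lemma iPow_succ (r : ℕ) (a : ℤ × ℤ)
    (h : ((a.1 + r) + 1, (a.2 - r) - 1) = (a.1 + (r + 1 : ℕ), a.2 - (r + 1 : ℕ))) (x : D a) :
    iPow D i (r + 1) a x = dcast D h (i (a.1 + r, a.2 - r) (iPow D i r a x)) := rfl

lemma iPow_succ_left (r : ℕ) (a : ℤ × ℤ)
    (h : ((a.1 + 1) + r, (a.2 - 1) - r) = (a.1 + (r + 1 : ℕ), a.2 - (r + 1 : ℕ))) (x : D a) :
    iPow D i (r + 1) a x = dcast D h (iPow D i r (a.1 + 1, a.2 - 1) (i a x)) := by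
  induction r with
  | zero =>
      show dcast D _ (i (a.1 + (0 : ℕ), a.2 - (0 : ℕ)) (dcast D _ x)) = _
      rw [i_dcast D i (by simp) (by simp)]
      show dcast D _ (dcast D _ (i a x)) = dcast D _ (dcast D _ (i a x))
      rw [dcast_dcast, dcast_dcast]
  | succ r ih =>
      rw [iPow_succ D i (r + 1) a
          (by simp only [Prod.mk.injEq]; push_cast; constructor <;> ring),
        ih (by simp only [Prod.mk.injEq]; push_cast; constructor <;> ring),
        i_dcast D i _ (by simp only [Prod.mk.injEq]; push_cast; constructor <;> ring),
        dcast_dcast,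
        iPow_succ D i r (a.1 + 1, a.2 - 1)
          (by simp only [Prod.mk.injEq]; push_cast; constructor <;> ring),
        dcast_dcast]

end AuxLemmas

theorem exact_couple_limit_sheet_map
    (D C : ℤ × ℤ → Type u) [∀ a, AddCommGroup (D a)] [∀ a, AddCommGroup (C a)]
    (i : ∀ a : ℤ × ℤ, D a →+ D (a.1 + 1, a.2 - 1))
    (j : ∀ a : ℤ × ℤ, D a →+ C a)
    (k : ∀ a : ℤ × ℤ, C a →+ D (a.1 - 1, a.2))
    -- exactness of the couple: im i = ker j, im j = ker k, im k = ker i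
    (hij : ∀ (a : ℤ × ℤ) (x : D a), j a x = 0 ↔
      ∃ y : D (a.1 - 1, a.2 + 1),
        dcast D (by obtain ⟨a1, a2⟩ := a; simp only [Prod.mk.injEq]; constructor <;> ring)
          (i (a.1 - 1, a.2 + 1) y) = x)
    (hjk : ∀ (a : ℤ × ℤ) (x : C a), k a x = 0 ↔ ∃ y : D a, j a y = x)
    (hki : ∀ (a : ℤ × ℤ) (x : D a), i a x = 0 ↔
      ∃ y : C (a.1 + 1, a.2),
        dcast D (by obtain ⟨a1, a2⟩ := a; simp)
          (k (a.1 + 1, a.2) y) = x)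
    (p : ℕ) (q : ℤ) :
    -- the subgroup ⋂_{r≥1} k⁻¹(im i^r) of C_{p,q}
    ∀ (Num : AddSubgroup (C ((p : ℤ), q)))
      (_ : Num = ⨅ r : ℕ,
        (((dcast D (by simp only [Prod.mk.injEq]; constructor <;> (push_cast; ring))).comp
            (iPow D i (r + 1) ((p : ℤ) - 1 - (r + 1), q + (r + 1)))).range).comap
          (k ((p : ℤ), q)))
    -- the subgroup ⋃_{r≥1} j(ker i^r) of C_{p,q}
    (Den : AddSubgroup (C ((p : ℤ), q)))
    (_ : Den = ⨆ r : ℕ,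
        AddSubgroup.map (j ((p : ℤ), q)) ((iPow D i (r + 1) ((p : ℤ), q)).ker))
    -- the subgroups (ker i^{p+1}) and (ker i^p) of D_{−1,p+q}
    (K₁ K₀ : AddSubgroup (D (-1, (p : ℤ) + q)))
    (_ : K₁ = (iPow D i (p + 1) (-1, (p : ℤ) + q)).ker)
    (_ : K₀ = (iPow D i p (-1, (p : ℤ) + q)).ker),
    -- there is a homomorphism ψ from E^∞_{p,q} = Num/Den to (ker i^{p+1})/(ker i^p) with
    -- i^p ∘ ψ equal to the map induced by k
    ∃ ψ : (↥Num ⧸ (Den.addSubgroupOf Num)) →+ (↥K₁ ⧸ (K₀.addSubgroupOf K₁)),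
      ∀ (x : C ((p : ℤ), q)) (hx : x ∈ Num) (y : D (-1, (p : ℤ) + q)) (hy : y ∈ K₁),
        ψ (QuotientAddGroup.mk ⟨x, hx⟩) = QuotientAddGroup.mk ⟨y, hy⟩ →
        dcast D (by simp only [Prod.mk.injEq]; constructor <;> (push_cast; ring))
          (iPow D i p (-1, (p : ℤ) + q) y) = k ((p : ℤ), q) x := by
  intro Num hNum Den hDen K₁ K₀ hK₁ hK₀
  -- k ∘ j = 0, hence k kills Den
  have kDen : ∀ c ∈ Den, k ((p : ℤ), q) c = 0 := by
    intro c hc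
    rw [hDen] at hc
    have hle : (⨆ r : ℕ,
        AddSubgroup.map (j ((p : ℤ), q)) ((iPow D i (r + 1) ((p : ℤ), q)).ker))
        ≤ (k ((p : ℤ), q)).ker := by
      refine iSup_le fun r => ?_
      rintro c ⟨d, _, rfl⟩
      exact (hjk _ _).mpr ⟨d, rfl⟩
    exact hle hc
  -- i ∘ k = 0
  have ik : ∀ x : C ((p : ℤ), q), i ((p : ℤ) - 1, q) (k ((p : ℤ), q) x) = 0 := by
    intro x
    rw [hki]
    refine ⟨dcast C (by simp) x, ?_⟩
    rw [k_dcast D C k _ (by simp), dcast_dcast,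
      dcast_refl]
  -- existence of lifts
  have ex : ∀ x ∈ Num, ∃ y : D (-1, (p : ℤ) + q),
      iPow D i (p + 1) (-1, (p : ℤ) + q) y = 0 ∧
      dcast D (by simp only [Prod.mk.injEq]; constructor <;> (push_cast; ring))
        (iPow D i p (-1, (p : ℤ) + q) y) = k ((p : ℤ), q) x := by
    intro x hx
    rw [hNum] at hx
    have h1 := (AddSubgroup.mem_iInf).mp hx p
    rw [AddSubgroup.mem_comap, AddMonoidHom.mem_range] at h1
    obtain ⟨w, hw⟩ := h1
    simp only [AddMonoidHom.comp_apply] at hw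
    -- e1 : iPow p (s+1) (i s w) = dcast (k x)
    have e1 : iPow D i p (((p : ℤ) - 1 - (↑p + 1)) + 1, (q + (↑p + 1)) - 1) (i _ w)
        = dcast D (by simp only [Prod.mk.injEq]; constructor <;> (push_cast; ring))
            (k ((p : ℤ), q) x) := by
      have h2 := (dcast_eq_iff D _ _ _).mp
        (iPow_succ_left D i p _
          (by simp only [Prod.mk.injEq]; constructor <;> (push_cast; ring)) w).symm
      rw [h2, (dcast_eq_iff D _ _ _).mp hw, dcast_dcast]
    refine ⟨dcast D (by simp only [Prod.mk.injEq]; constructor <;> (push_cast; ring)) (i _ w),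
      ?_, ?_⟩
    · rw [iPow_dcast D i (p + 1) _
          (by simp only [Prod.mk.injEq]; constructor <;> (push_cast; ring)),
        dcast_eq_zero,
        iPow_succ D i p _ (by simp only [Prod.mk.injEq]; constructor <;> (push_cast; ring)),
        dcast_eq_zero, e1,
        i_dcast D i _ (by simp only [Prod.mk.injEq]; constructor <;> (push_cast; ring)),
        ik, map_zero]
    · rw [iPow_dcast D i p _
          (by simp only [Prod.mk.injEq]; constructor <;> (push_cast; ring)),
        dcast_dcast, e1, dcast_dcast, dcast_refl]
  choose Y hY1 hY2 using ex
  -- the underlying function of ψ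
  have hYK₁ : ∀ (x : C ((p : ℤ), q)) (hx : x ∈ Num), Y x hx ∈ K₁ := by
    intro x hx; rw [hK₁]; exact hY1 x hx
  set F0 : ↥Num → (↥K₁ ⧸ (K₀.addSubgroupOf K₁)) :=
    fun x => QuotientAddGroup.mk ⟨Y x.1 x.2, hYK₁ x.1 x.2⟩ with hF0
  have key : ∀ (x : ↥Num) (y : D (-1, (p : ℤ) + q)) (hy : y ∈ K₁),
      dcast D (by simp only [Prod.mk.injEq]; constructor <;> (push_cast; ring))
        (iPow D i p (-1, (p : ℤ) + q) y) = k ((p : ℤ), q) x.1 →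
      F0 x = QuotientAddGroup.mk ⟨y, hy⟩ := by
    intro x y hy hxy
    refine QuotientAddGroup.eq.mpr ?_
    rw [AddSubgroup.mem_addSubgroupOf]
    show -(Y x.1 x.2) + y ∈ K₀
    rw [hK₀, AddMonoidHom.mem_ker, map_add, map_neg, neg_add_eq_zero]
    rw [← dcast_inj D
      (show ((-1 : ℤ) + (p : ℕ), ((p : ℤ) + q) - (p : ℕ)) = ((p : ℤ) - 1, q) by
        simp only [Prod.mk.injEq]; constructor <;> (push_cast; ring))]
    rw [hY2 x.1 x.2, hxy]
  have hadd : ∀ x y : ↥Num, F0 (x + y) = F0 x + F0 y := by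
    intro x y
    have hmem : Y x.1 x.2 + Y y.1 y.2 ∈ K₁ := K₁.add_mem (hYK₁ _ _) (hYK₁ _ _)
    have h := key (x + y) (Y x.1 x.2 + Y y.1 y.2) hmem ?_
    · rw [h]; rfl
    · rw [map_add, map_add, hY2 x.1 x.2, hY2 y.1 y.2]
      exact (map_add _ _ _).symm
  have h0 : ∀ x ∈ Den.addSubgroupOf Num, (AddMonoidHom.mk' F0 hadd) x = 0 := by
    intro x hx
    have hk0 : k ((p : ℤ), q) x.1 = 0 := kDen x.1 ((AddSubgroup.mem_addSubgroupOf).mp hx)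
    show F0 x = 0
    rw [hF0]
    refine (QuotientAddGroup.eq_zero_iff _).mpr ?_
    rw [AddSubgroup.mem_addSubgroupOf]
    show Y x.1 x.2 ∈ K₀
    rw [hK₀, AddMonoidHom.mem_ker]
    have := hY2 x.1 x.2
    rw [hk0] at this
    exact (dcast_eq_zero D _ _).mp this
  refine ⟨QuotientAddGroup.lift (Den.addSubgroupOf Num) (AddMonoidHom.mk' F0 hadd) h0, ?_⟩
  intro x hx y hy hψ
  have hψ' : QuotientAddGroup.mk (⟨Y x hx, hYK₁ x hx⟩ : ↥K₁)
      = (QuotientAddGroup.mk ⟨y, hy⟩ : ↥K₁ ⧸ (K₀.addSubgroupOf K₁)) := hψ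
  have hm := QuotientAddGroup.eq.mp hψ'
  rw [AddSubgroup.mem_addSubgroupOf] at hm
  have hm' : -(Y x hx) + y ∈ K₀ := hm
  rw [hK₀, AddMonoidHom.mem_ker, map_add, map_neg, neg_add_eq_zero] at hm'
  rw [← hm']
  exact hY2 x hx
end
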